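/- arXiv:2507.02881 — 2 statements merged into one kernel-verified Lean document; each statement's English description precedes it below -/
import Mathlib

section
/- (Greguš fixed point theorem) Let E be a nonempty closed convex subset of a Banach space X and T : E → E satisfy ‖Tx − Ty‖ ≤ a‖x − y‖ + b‖Tx − x‖ + c‖Ty − y‖ for all x,y ∈ E, where 0 < a < 1, b ≥ 0, c ≥ 0 and a + b + c = 1. Then T has a unique fixed point in E. -/
/-- Greguš fixed point theorem. -/
theorem stmt_10 {X : Type*} [NormedAddCommGroup X] [NormedSpace ℝ X]
    [CompleteSpace X] (E : Set X) (hne : E.Nonempty)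
    (hclosed : IsClosed E) (hconv : Convex ℝ E)
    (T : X → X) (hT : Set.MapsTo T E E)
    (a b c : ℝ) (ha0 : 0 < a) (ha1 : a < 1) (hb : 0 ≤ b) (hc : 0 ≤ c)
    (habc : a + b + c = 1)
    (hineq : ∀ x ∈ E, ∀ y ∈ E,
      ‖T x - T y‖ ≤ a * ‖x - y‖ + b * ‖T x - x‖ + c * ‖T y - y‖) :
    ∃! z, z ∈ E ∧ T z = z := by
  obtain ⟨x₀, hx₀⟩ := hne
  -- symmetrized inequality
  have hsym : ∀ x ∈ E, ∀ y ∈ E, ‖T x - T y‖ ≤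
      a * ‖x - y‖ + (1 - a) / 2 * ‖T x - x‖ + (1 - a) / 2 * ‖T y - y‖ := by
    intro x hx y hy
    have h1 := hineq x hx y hy
    have h2 := hineq y hy x hx
    rw [norm_sub_rev (T y), norm_sub_rev y] at h2
    have hP : a * ‖T x - x‖ + b * ‖T x - x‖ + c * ‖T x - x‖ = ‖T x - x‖ := by
      have : (a + b + c) * ‖T x - x‖ = 1 * ‖T x - x‖ := by rw [habc]
      linarith [this]
    have hQ : a * ‖T y - y‖ + b * ‖T y - y‖ + c * ‖T y - y‖ = ‖T y - y‖ := by
      have : (a + b + c) * ‖T y - y‖ = 1 * ‖T y - y‖ := by rw [habc]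
      linarith [this]
    linarith [h1, h2, hP, hQ]
  set L : ℝ := (a ^ 2 + a + 2) / (2 * (1 + a)) with hLdef
  have h2a : (0:ℝ) < 2 * (1 + a) := by linarith
  have hL0 : 0 ≤ L := by
    apply div_nonneg _ h2a.le
    nlinarith
  have hL1 : L < 1 := by
    rw [hLdef, div_lt_one h2a]
    nlinarith [mul_pos ha0 (by linarith : (0:ℝ) < 1 - a)]
  -- the key contraction step
  set F : X → X := fun w => (2⁻¹ : ℝ) • T (T w) + (2⁻¹ : ℝ) • T (T (T w)) with hF
  have key : ∀ x ∈ E, F x ∈ E ∧ ‖T (F x) - F x‖ ≤ L * ‖T x - x‖ := by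
    intro x hx
    have hy₁ : T x ∈ E := hT hx
    have hy₂ : T (T x) ∈ E := hT hy₁
    have hy₃ : T (T (T x)) ∈ E := hT hy₂
    set y₁ := T x with hy1d
    set y₂ := T y₁ with hy2d
    set y₃ := T y₂ with hy3d
    set d := ‖y₁ - x‖ with hdd
    have hd0 : 0 ≤ d := norm_nonneg _
    -- ‖y₂ - y₁‖ ≤ d
    have h1 : ‖y₂ - y₁‖ ≤ d := by
      have h := hsym y₁ hy₁ x hx
      rw [← hy2d, ← hy1d, ← hdd] at h
      have hh : (1 + a) * ‖y₂ - y₁‖ ≤ (1 + a) * d := by linarith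
      exact le_of_mul_le_mul_left hh (by linarith)
    -- ‖y₃ - y₂‖ ≤ d
    have h2 : ‖y₃ - y₂‖ ≤ ‖y₂ - y₁‖ := by
      have h := hsym y₂ hy₂ y₁ hy₁
      rw [← hy3d, ← hy2d] at h
      have hh : (1 + a) * ‖y₃ - y₂‖ ≤ (1 + a) * ‖y₂ - y₁‖ := by linarith
      exact le_of_mul_le_mul_left hh (by linarith)
    have h2d : ‖y₃ - y₂‖ ≤ d := h2.trans h1
    -- ‖y₂ - x‖ ≤ 2 d
    have h21 : ‖y₂ - x‖ ≤ 2 * d := by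
      have : y₂ - x = (y₂ - y₁) + (y₁ - x) := by abel
      calc ‖y₂ - x‖ = ‖(y₂ - y₁) + (y₁ - x)‖ := by rw [← this]
        _ ≤ ‖y₂ - y₁‖ + ‖y₁ - x‖ := norm_add_le _ _
        _ ≤ 2 * d := by rw [← hdd]; linarith
    -- ‖y₃ - y₁‖ ≤ (1 + a) d
    have h3 : ‖y₃ - y₁‖ ≤ (1 + a) * d := by
      have h := hsym y₂ hy₂ x hx
      rw [← hy3d, ← hy1d, ← hdd] at h
      linarith [h, mul_le_mul_of_nonneg_left h21 ha0.le,
        mul_le_mul_of_nonneg_left h2d (by linarith : (0:ℝ) ≤ (1 - a) / 2)]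
    set z := (2⁻¹ : ℝ) • y₂ + (2⁻¹ : ℝ) • y₃ with hzd
    have hzE : z ∈ E := hconv hy₂ hy₃ (by norm_num) (by norm_num) (by norm_num)
    have hFx : F x = z := by rw [hF]
    have nz2 : ‖z - y₂‖ ≤ d / 2 := by
      have e : z - y₂ = (2⁻¹ : ℝ) • (y₃ - y₂) := by rw [hzd]; module
      rw [e, norm_smul]
      simp only [norm_inv, Real.norm_ofNat]
      linarith
    have nz1 : ‖z - y₁‖ ≤ (2 + a) * d / 2 := by
      have e : z - y₁ = (2⁻¹ : ℝ) • (y₂ - y₁) + (2⁻¹ : ℝ) • (y₃ - y₁) := by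
        rw [hzd]; module
      calc ‖z - y₁‖ ≤ ‖(2⁻¹ : ℝ) • (y₂ - y₁)‖ + ‖(2⁻¹ : ℝ) • (y₃ - y₁)‖ := by
            rw [e]; exact norm_add_le _ _
        _ = 2⁻¹ * ‖y₂ - y₁‖ + 2⁻¹ * ‖y₃ - y₁‖ := by
            rw [norm_smul, norm_smul]; simp
        _ ≤ (2 + a) * d / 2 := by linarith
    set p := ‖T z - z‖ with hpd
    have hp0 : 0 ≤ p := norm_nonneg _
    have hdecomp : p ≤ 2⁻¹ * ‖T z - y₂‖ + 2⁻¹ * ‖T z - y₃‖ := by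
      have e : T z - z = (2⁻¹ : ℝ) • (T z - y₂) + (2⁻¹ : ℝ) • (T z - y₃) := by
        rw [hzd]; module
      calc p = ‖(2⁻¹ : ℝ) • (T z - y₂) + (2⁻¹ : ℝ) • (T z - y₃)‖ := by rw [hpd, e]
        _ ≤ ‖(2⁻¹ : ℝ) • (T z - y₂)‖ + ‖(2⁻¹ : ℝ) • (T z - y₃)‖ := norm_add_le _ _
        _ = 2⁻¹ * ‖T z - y₂‖ + 2⁻¹ * ‖T z - y₃‖ := by
            rw [norm_smul, norm_smul]; simp
    have hA : ‖T z - y₂‖ ≤ a * ((2 + a) * d / 2) + (1 - a) / 2 * p + (1 - a) / 2 * d := by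
      have h := hsym z hzE y₁ hy₁
      rw [← hy2d, ← hpd] at h
      linarith [h, mul_le_mul_of_nonneg_left nz1 ha0.le,
        mul_le_mul_of_nonneg_left h1 (by linarith : (0:ℝ) ≤ (1 - a) / 2)]
    have hB : ‖T z - y₃‖ ≤ a * (d / 2) + (1 - a) / 2 * p + (1 - a) / 2 * d := by
      have h := hsym z hzE y₂ hy₂
      rw [← hy3d, ← hpd] at h
      linarith [h, mul_le_mul_of_nonneg_left nz2 ha0.le,
        mul_le_mul_of_nonneg_left h2d (by linarith : (0:ℝ) ≤ (1 - a) / 2)]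
    refine ⟨by rw [hFx]; exact hzE, ?_⟩
    rw [hLdef, div_mul_eq_mul_div, le_div_iff₀ h2a]
    linarith [hdecomp, hA, hB]
  -- the iterated sequence
  set u : ℕ → X := fun n => F^[n] x₀ with hud
  have hu0 : u 0 = x₀ := rfl
  have husucc : ∀ n, u (n + 1) = F (u n) := by
    intro n; rw [hud]; exact Function.iterate_succ_apply' F n x₀
  have huE : ∀ n, u n ∈ E := by
    intro n; induction n with
    | zero => exact hx₀
    | succ n ih => rw [husucc]; exact (key _ ih).1
  set d₀ := ‖T x₀ - x₀‖ with hd₀d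
  have hD : ∀ n, ‖T (u n) - u n‖ ≤ L ^ n * d₀ := by
    intro n; induction n with
    | zero => simp [hu0, hd₀d]
    | succ n ih =>
      rw [husucc]
      calc ‖T (F (u n)) - F (u n)‖ ≤ L * ‖T (u n) - u n‖ := (key _ (huE n)).2
        _ ≤ L * (L ^ n * d₀) := by
            exact mul_le_mul_of_nonneg_left ih hL0
        _ = L ^ (n + 1) * d₀ := by ring
  have hd₀0 : 0 ≤ d₀ := norm_nonneg _
  have hDlim : Filter.Tendsto (fun n => ‖T (u n) - u n‖) Filter.atTop (nhds 0) := by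
    apply squeeze_zero (fun n => norm_nonneg _) hD
    have := (tendsto_pow_atTop_nhds_zero_of_lt_one hL0 hL1).mul_const d₀
    simpa using this
  -- pairwise distance bound
  set C : ℝ := (3 - a) / (2 * (1 - a)) with hCd
  have h1a : (0:ℝ) < 2 * (1 - a) := by linarith
  have hC0 : 0 ≤ C := div_nonneg (by linarith) h1a.le
  have hdist : ∀ n m, ‖u n - u m‖ ≤ C * (‖T (u n) - u n‖ + ‖T (u m) - u m‖) := by
    intro n m
    have h := hsym (u n) (huE n) (u m) (huE m)
    have tri : ‖u n - u m‖ ≤ ‖T (u n) - u n‖ + ‖T (u n) - T (u m)‖ + ‖T (u m) - u m‖ := by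
      have e : u n - u m = -(T (u n) - u n) + (T (u n) - T (u m)) + (T (u m) - u m) := by
        abel
      calc ‖u n - u m‖ = ‖-(T (u n) - u n) + (T (u n) - T (u m)) + (T (u m) - u m)‖ := by
            rw [← e]
        _ ≤ ‖-(T (u n) - u n) + (T (u n) - T (u m))‖ + ‖T (u m) - u m‖ := norm_add_le _ _
        _ ≤ ‖-(T (u n) - u n)‖ + ‖T (u n) - T (u m)‖ + ‖T (u m) - u m‖ := by
            linarith [norm_add_le (-(T (u n) - u n)) (T (u n) - T (u m))]
        _ = ‖T (u n) - u n‖ + ‖T (u n) - T (u m)‖ + ‖T (u m) - u m‖ := by rw [norm_neg]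
    rw [hCd, div_mul_eq_mul_div, le_div_iff₀ h1a]
    linarith [h, tri]
  -- u is Cauchy
  have hcauchy : CauchySeq u := by
    rw [Metric.cauchySeq_iff']
    intro ε hε
    have hten : Filter.Tendsto (fun n => 2 * C * d₀ * L ^ n) Filter.atTop (nhds 0) := by
      have := (tendsto_pow_atTop_nhds_zero_of_lt_one hL0 hL1).const_mul (2 * C * d₀)
      simpa using this
    obtain ⟨N, hN⟩ := Filter.eventually_atTop.mp (hten.eventually (gt_mem_nhds hε))
    refine ⟨N, fun n hn => ?_⟩
    have hLn : L ^ n ≤ L ^ N := pow_le_pow_of_le_one hL0 hL1.le hn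
    have hLN0 : 0 ≤ L ^ N := pow_nonneg hL0 N
    calc dist (u n) (u N) = ‖u n - u N‖ := by rw [dist_eq_norm]
      _ ≤ C * (‖T (u n) - u n‖ + ‖T (u N) - u N‖) := hdist n N
      _ ≤ C * (L ^ n * d₀ + L ^ N * d₀) := by
          apply mul_le_mul_of_nonneg_left _ hC0
          exact add_le_add (hD n) (hD N)
      _ ≤ C * (L ^ N * d₀ + L ^ N * d₀) := by
          apply mul_le_mul_of_nonneg_left _ hC0
          have := mul_le_mul_of_nonneg_right hLn hd₀0
          linarith
      _ = 2 * C * d₀ * L ^ N := by ring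
      _ < ε := hN N le_rfl
  obtain ⟨z, hz⟩ := cauchySeq_tendsto_of_complete hcauchy
  have hzE : z ∈ E := hclosed.mem_of_tendsto hz (Filter.Eventually.of_forall huE)
  -- z is a fixed point
  have hnz : Filter.Tendsto (fun n => ‖u n - z‖) Filter.atTop (nhds 0) := by
    have := tendsto_iff_dist_tendsto_zero.mp hz
    simpa [dist_eq_norm] using this
  have hnz' : Filter.Tendsto (fun n => ‖z - u n‖) Filter.atTop (nhds 0) := by
    have : (fun n => ‖z - u n‖) = fun n => ‖u n - z‖ := by
      funext n; exact norm_sub_rev _ _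
    rw [this]; exact hnz
  have hfix : T z = z := by
    set p := ‖T z - z‖ with hpd
    have hbound : ∀ n, (1 - (1 - a) / 2) * p ≤
        a * ‖z - u n‖ + ((1 - a) / 2 + 1) * ‖T (u n) - u n‖ + ‖u n - z‖ := by
      intro n
      have h := hsym z hzE (u n) (huE n)
      rw [← hpd] at h
      have tri : p ≤ ‖T z - T (u n)‖ + ‖T (u n) - u n‖ + ‖u n - z‖ := by
        have e : T z - z = (T z - T (u n)) + (T (u n) - u n) + (u n - z) := by abel
        calc p = ‖(T z - T (u n)) + (T (u n) - u n) + (u n - z)‖ := by rw [hpd, e]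
          _ ≤ ‖(T z - T (u n)) + (T (u n) - u n)‖ + ‖u n - z‖ := norm_add_le _ _
          _ ≤ ‖T z - T (u n)‖ + ‖T (u n) - u n‖ + ‖u n - z‖ := by
              linarith [norm_add_le (T z - T (u n)) (T (u n) - u n)]
      linarith
    have hg : Filter.Tendsto (fun n => a * ‖z - u n‖ +
        ((1 - a) / 2 + 1) * ‖T (u n) - u n‖ + ‖u n - z‖) Filter.atTop (nhds 0) := by
      have := ((hnz'.const_mul a).add (hDlim.const_mul ((1 - a) / 2 + 1))).add hnz
      simpa using this
    have hple : (1 - (1 - a) / 2) * p ≤ 0 := ge_of_tendsto' hg hbound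
    have hp0 : 0 ≤ p := norm_nonneg _
    have h' : (1 - (1 - a) / 2) * p ≤ (1 - (1 - a) / 2) * 0 := by linarith
    have : p ≤ 0 := le_of_mul_le_mul_left h' (by linarith)
    have : p = 0 := le_antisymm this hp0
    have : T z - z = 0 := norm_eq_zero.mp this
    exact sub_eq_zero.mp this
  refine ⟨z, ⟨hzE, hfix⟩, ?_⟩
  rintro w ⟨hwE, hw⟩
  have h := hineq w hwE z hzE
  rw [hw, hfix] at h
  simp only [sub_self, norm_zero, mul_zero, add_zero] at h
  have h' : (1 - a) * ‖w - z‖ ≤ (1 - a) * 0 := by linarith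
  have hw0 : ‖w - z‖ = 0 :=
    le_antisymm (le_of_mul_le_mul_left h' (by linarith)) (norm_nonneg _)
  exact sub_eq_zero.mp (norm_eq_zero.mp hw0)
end

section
/- Let E be a q-starshaped subset of a normed space, A, B selfmaps of E, and suppose ‖Ax − By‖² ≤ c₁·max{δ(Sx,[q,Ax])², δ(Ty,[q,By])², ‖Sx−Ty‖²} + c₂·max{δ(Sx,[q,Ax])·δ(Sx,[q,By]), δ(Ty,[q,By])·δ(Ty,[q,Ax])} + c₃·δ(Sx,[q,By])·δ(Ty,[q,Ax]) for all x,y, with c₁,c₂,c₃ ≥ 0. Then for k ∈ (0,1), the maps A_k x = kAx+(1-k)q, B_k y = kBy+(1-k)q satisfy ‖A_k x − B_k y‖² ≤ k²c₁·max{‖Sx−A_kx‖², ‖Ty−B_ky‖², ‖Sx−Ty‖²} + k²c₂·max{‖Sx−A_kx‖·‖Sx−B_ky‖, ‖Ty−B_ky‖·‖Ty−A_kx‖} + k²c₃·‖Sx−B_ky‖·‖Ty−A_kx‖. -/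
/-- The Gregus-type set-distance inequality transfers from (A,B) to the
averaged maps A_k, B_k. -/
theorem stmt_19 {X : Type*} [NormedAddCommGroup X] [NormedSpace ℝ X]
    (E : Set X) (q : X) (hq : q ∈ E)
    (hstar : ∀ x ∈ E, ∀ l ∈ Set.Icc (0 : ℝ) 1, l • x + (1 - l) • q ∈ E)
    (A B S T : X → X)
    (c₁ c₂ c₃ : ℝ) (hc₁ : 0 ≤ c₁) (hc₂ : 0 ≤ c₂) (hc₃ : 0 ≤ c₃)
    (hineq : ∀ x y : X,
      ‖A x - B y‖ ^ 2 ≤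
        c₁ * max (Metric.infDist (S x) (segment ℝ q (A x)) ^ 2)
            (max (Metric.infDist (T y) (segment ℝ q (B y)) ^ 2)
              (‖S x - T y‖ ^ 2)) +
        c₂ * max (Metric.infDist (S x) (segment ℝ q (A x)) *
              Metric.infDist (S x) (segment ℝ q (B y)))
            (Metric.infDist (T y) (segment ℝ q (B y)) *
              Metric.infDist (T y) (segment ℝ q (A x))) +
        c₃ * (Metric.infDist (S x) (segment ℝ q (B y)) *
              Metric.infDist (T y) (segment ℝ q (A x))))
    (k : ℝ) (hk : k ∈ Set.Ioo (0 : ℝ) 1) :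
    ∀ x y : X,
      ‖(k • A x + (1 - k) • q) - (k • B y + (1 - k) • q)‖ ^ 2 ≤
        k ^ 2 * c₁ * max (‖S x - (k • A x + (1 - k) • q)‖ ^ 2)
            (max (‖T y - (k • B y + (1 - k) • q)‖ ^ 2) (‖S x - T y‖ ^ 2)) +
        k ^ 2 * c₂ * max (‖S x - (k • A x + (1 - k) • q)‖ *
              ‖S x - (k • B y + (1 - k) • q)‖)
            (‖T y - (k • B y + (1 - k) • q)‖ *
              ‖T y - (k • A x + (1 - k) • q)‖) +
        k ^ 2 * c₃ * (‖S x - (k • B y + (1 - k) • q)‖ *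
              ‖T y - (k • A x + (1 - k) • q)‖) := by
  obtain ⟨hk0, hk1⟩ := hk
  intro x y
  -- membership of averaged points in segments
  have hmem : ∀ z : X, k • z + (1 - k) • q ∈ segment ℝ q z := by
    intro z
    exact ⟨1 - k, k, by linarith, le_of_lt hk0, by ring, by abel⟩
  -- infDist bounds
  have hdA : ∀ w : X, ∀ z : X,
      Metric.infDist w (segment ℝ q z) ≤ ‖w - (k • z + (1 - k) • q)‖ := by
    intro w z
    have := Metric.infDist_le_dist_of_mem (x := w) (hmem z)
    rwa [dist_eq_norm] at this
  have h1 := hdA (S x) (A x)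
  have h2 := hdA (S x) (B y)
  have h3 := hdA (T y) (B y)
  have h4 := hdA (T y) (A x)
  have hδ : ∀ w : X, ∀ F : Set X, 0 ≤ Metric.infDist w F := fun _ _ =>
    Metric.infDist_nonneg
  -- LHS rewrite
  have hL : ‖(k • A x + (1 - k) • q) - (k • B y + (1 - k) • q)‖
      = k * ‖A x - B y‖ := by
    have : (k • A x + (1 - k) • q) - (k • B y + (1 - k) • q)
        = k • (A x - B y) := by
      rw [smul_sub]; abel
    rw [this, norm_smul, Real.norm_eq_abs, abs_of_pos hk0]
  have hk2 : (0 : ℝ) ≤ k ^ 2 := sq_nonneg k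
  have key := hineq x y
  -- bound each max term
  have m1 : max (Metric.infDist (S x) (segment ℝ q (A x)) ^ 2)
            (max (Metric.infDist (T y) (segment ℝ q (B y)) ^ 2)
              (‖S x - T y‖ ^ 2)) ≤
      max (‖S x - (k • A x + (1 - k) • q)‖ ^ 2)
            (max (‖T y - (k • B y + (1 - k) • q)‖ ^ 2) (‖S x - T y‖ ^ 2)) := by
    apply max_le_max
    · exact pow_le_pow_left₀ (hδ _ _) h1 2
    · exact max_le_max (pow_le_pow_left₀ (hδ _ _) h3 2) le_rfl
  have m2 : max (Metric.infDist (S x) (segment ℝ q (A x)) *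
              Metric.infDist (S x) (segment ℝ q (B y)))
            (Metric.infDist (T y) (segment ℝ q (B y)) *
              Metric.infDist (T y) (segment ℝ q (A x))) ≤
      max (‖S x - (k • A x + (1 - k) • q)‖ * ‖S x - (k • B y + (1 - k) • q)‖)
          (‖T y - (k • B y + (1 - k) • q)‖ * ‖T y - (k • A x + (1 - k) • q)‖) := by
    exact max_le_max (mul_le_mul h1 h2 (hδ _ _) (norm_nonneg _))
      (mul_le_mul h3 h4 (hδ _ _) (norm_nonneg _))
  have m3 : Metric.infDist (S x) (segment ℝ q (B y)) *
              Metric.infDist (T y) (segment ℝ q (A x)) ≤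
      ‖S x - (k • B y + (1 - k) • q)‖ * ‖T y - (k • A x + (1 - k) • q)‖ :=
    mul_le_mul h2 h4 (hδ _ _) (norm_nonneg _)
  calc ‖(k • A x + (1 - k) • q) - (k • B y + (1 - k) • q)‖ ^ 2
      = k ^ 2 * ‖A x - B y‖ ^ 2 := by rw [hL]; ring
    _ ≤ k ^ 2 * (c₁ * max (Metric.infDist (S x) (segment ℝ q (A x)) ^ 2)
            (max (Metric.infDist (T y) (segment ℝ q (B y)) ^ 2)
              (‖S x - T y‖ ^ 2)) +
        c₂ * max (Metric.infDist (S x) (segment ℝ q (A x)) *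
              Metric.infDist (S x) (segment ℝ q (B y)))
            (Metric.infDist (T y) (segment ℝ q (B y)) *
              Metric.infDist (T y) (segment ℝ q (A x))) +
        c₃ * (Metric.infDist (S x) (segment ℝ q (B y)) *
              Metric.infDist (T y) (segment ℝ q (A x)))) :=
        mul_le_mul_of_nonneg_left key hk2
    _ ≤ _ := by
        have t1 := mul_le_mul_of_nonneg_left m1 hc₁
        have t2 := mul_le_mul_of_nonneg_left m2 hc₂
        have t3 := mul_le_mul_of_nonneg_left m3 hc₃
        nlinarith [hk2]
end
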